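/- Let p be a prime, g an integer with p ∤ g, u_0 ∈ {1,…,p−1}, and k ≥ 1 an integer with 2^k < p. Then τ_k ≥ t·2^{k−1}/p, where t is the least eventual period of {u_n} and τ_k is the least eventual period of {ξ^{(k)}_n}. -/

import Mathlib

open Pointwise

/-- The exponential generator sequence: `u 0 = u0` and `u (n+1)` is the representative in
`{0,…,p-1}` of `g ^ (u n) mod p` (which lies in `{1,…,p-1}` when `p ∤ g`). -/
def expSeq (p : ℕ) (g : ℤ) (u0 : ℕ) : ℕ → ℕ
  | 0 => u0
  | n + 1 => ((g ^ expSeq p g u0 n) % (p : ℤ)).toNat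

/-- `d` is the least eventual period of the sequence `f`. -/
def IsLeastPeriod (f : ℕ → ℕ) (d : ℕ) : Prop :=
  IsLeast {m : ℕ | 0 < m ∧ ∃ s : ℕ, ∀ n : ℕ, s ≤ n → f (n + m) = f n} d

/-- `s` is the least preperiod of `f` with respect to the period `t`. -/
def IsLeastPreperiod (f : ℕ → ℕ) (t s : ℕ) : Prop :=
  IsLeast {s : ℕ | ∀ n : ℕ, s ≤ n → f (n + t) = f n} s

/-- `I` is an interval of `K` consecutive integers. -/
def IsIntervalOf (I : Finset ℤ) (K : ℕ) : Prop :=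
  ∃ x : ℤ, I = Finset.Icc x (x + K - 1)

/-- `R_{a,b,g,p}(I,J)`: the number of `(u,x,y) ∈ {1,…,p-1} × I × J` with
`a·u ≡ x (mod p)` and `b·g^u ≡ y (mod p)`. -/
def Rcount (p : ℕ) (a b g : ℤ) (I J : Finset ℤ) : ℕ :=
  (((Finset.Icc 1 (p - 1)) ×ˢ I ×ˢ J).filter
    (fun w : ℕ × ℤ × ℤ =>
      (a * w.1 - w.2.1) % (p : ℤ) = 0 ∧ (b * g ^ w.1 - w.2.2) % (p : ℤ) = 0)).card

/-- `ν_k(N)`: the number of distinct values among `f 0 mod 2^k, …, f (N-1) mod 2^k`. -/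
def nuCount (f : ℕ → ℕ) (k N : ℕ) : ℕ :=
  ((Finset.range N).image (fun n => f n % 2 ^ k)).card

/-- `V_k(ω)`: the number of `n < l` with `f n mod 2^k = ω`. -/
def Vcount (f : ℕ → ℕ) (k l ω : ℕ) : ℕ :=
  ((Finset.range l).filter (fun n => f n % 2 ^ k = ω)).card

open Finset

/-!
Past a preperiod, `ξ^{(k)}` is `τ_k`-periodic, so the `M + 1` terms `u_{s + iτ_k}`, `i ≤ M`,
share their `k` low bits. There are at most `M = ⌊(p-1)/2^k⌋ + 1` such residues below `p`,
so two of these terms coincide; as `u` is a first-order recurrence, equal terms are at least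
`t` apart. Hence `t ≤ τ_k M ≤ τ_k p / 2^{k-1}`.
-/

lemma IsLeastPeriod.le_sub_of_apply_eq {f F : ℕ → ℕ} (hf : ∀ n, f (n + 1) = F (f n))
    {t : ℕ} (ht : IsLeastPeriod f t) {a b : ℕ} (hab : a < b) (h : f a = f b) : t ≤ b - a := by
  have shift : ∀ j, f (a + j) = f (b + j) := by
    intro j
    induction j with
    | zero => exact h
    | succ j ih => rw [← add_assoc, ← add_assoc, hf, hf, ih]
  refine ht.2 ⟨by omega, a, fun n hn => ?_⟩
  have := shift (n - a)
  rw [show b + (n - a) = n + (b - a) by omega, show a + (n - a) = n by omega] at this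
  exact this.symm

lemma card_filter_mod_eq_le (p q c : ℕ) :
    #{v ∈ range p | v % q = c} ≤ (p - 1) / q + 1 := by
  calc #{v ∈ range p | v % q = c}
      ≤ #(range ((p - 1) / q + 1)) := by
        refine card_le_card_of_injOn (· / q) (fun v hv => ?_) (fun v hv w hw hvw => ?_)
        · simp only [mem_coe, mem_filter, mem_range] at hv
          simpa [Nat.lt_succ_iff] using Nat.div_le_div_right (c := q) (by omega : v ≤ p - 1)
        · simp only [mem_coe, mem_filter, mem_range] at hv hw
          rw [← Nat.div_add_mod v q, ← Nat.div_add_mod w q, hv.2, hw.2]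
          exact congrArg (q * · + c) hvw
    _ = (p - 1) / q + 1 := card_range _

lemma IsLeastPeriod.le_mul_of_card_fiber_le {f F : ℕ → ℕ} (hf : ∀ n, f (n + 1) = F (f n))
    {t : ℕ} (ht : IsLeastPeriod f t) (π : ℕ → ℕ) {τ s : ℕ} (hτ : 0 < τ)
    (hper : ∀ n, s ≤ n → π (f (n + τ)) = π (f n)) (S : Finset ℕ) (hS : ∀ n, f n ∈ S)
    (M : ℕ) (hM : ∀ c, #{v ∈ S | π v = c} ≤ M) : t ≤ τ * M := by
  by_contra! hlt
  have hfiber : ∀ i, π (f (s + i * τ)) = π (f s) := by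
    intro i
    induction i with
    | zero => simp
    | succ i ih => rw [add_one_mul, ← add_assoc, hper _ (by omega), ih]
  obtain ⟨i, hi, j, hj, hij, heq⟩ := exists_ne_map_eq_of_card_lt_of_maps_to
    (s := range (M + 1)) (t := {v ∈ S | π v = π (f s)}) (f := fun i => f (s + i * τ))
    (by simpa using Nat.lt_succ_of_le (hM _)) (fun i _ => by simp [hS, hfiber])
  simp only [mem_range] at hi hj
  have separated : ∀ {a b}, a < b → b ≤ M → f (s + a * τ) ≠ f (s + b * τ) := by
    intro a b hab hb heq
    have ht_le := ht.le_sub_of_apply_eq hf (by nlinarith) heq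
    have hgap : (s + b * τ) - (s + a * τ) ≤ τ * M := by
      rw [Nat.add_sub_add_left, ← Nat.sub_mul, mul_comm]
      exact Nat.mul_le_mul_left _ (by omega)
    omega
  rcases Nat.lt_or_gt_of_ne hij with h | h
  · exact separated h (by omega) heq
  · exact separated h (by omega) heq.symm

lemma expSeq_succ (p : ℕ) (g : ℤ) (u0 n : ℕ) :
    expSeq p g u0 (n + 1) = ((g ^ expSeq p g u0 n) % (p : ℤ)).toNat :=
  rfl

lemma expSeq_lt {p : ℕ} (g : ℤ) {u0 : ℕ} (hu0 : u0 < p) (n : ℕ) : expSeq p g u0 n < p := by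
  cases n with
  | zero => exact hu0
  | succ n =>
    have hp : (0 : ℤ) < p := by omega
    have := Int.emod_lt_of_pos (g ^ expSeq p g u0 n) hp
    simp only [expSeq]
    omega

lemma sub_one_div_two_pow_add_one_mul_le {p k : ℕ} (h : 2 ^ k < p) :
    ((p - 1) / 2 ^ k + 1) * 2 ^ (k - 1) ≤ p := by
  cases k with
  | zero => simp; omega
  | succ k =>
    have hq : 1 ≤ (p - 1) / 2 ^ (k + 1) := (Nat.one_le_div_iff (by positivity)).2 (by omega)
    calc ((p - 1) / 2 ^ (k + 1) + 1) * 2 ^ k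
        ≤ (p - 1) / 2 ^ (k + 1) * 2 * 2 ^ k := Nat.mul_le_mul_right _ (by omega)
      _ = (p - 1) / 2 ^ (k + 1) * 2 ^ (k + 1) := by ring
      _ ≤ p := (Nat.div_mul_le_self _ _).trans (Nat.sub_le _ _)

theorem tau_ge_trivial_bound_general
    (p : ℕ) (g : ℤ)
    (u0 : ℕ) (hu0 : u0 ∈ Finset.Icc 1 (p - 1)) (k : ℕ)
    (h2k : 2 ^ k < p)
    (t τ : ℕ) (ht : IsLeastPeriod (expSeq p g u0) t)
    (hτ : IsLeastPeriod (fun n => expSeq p g u0 n % 2 ^ k) τ) :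
    (t : ℝ) * 2 ^ (k - 1) / p ≤ (τ : ℝ) := by
  obtain ⟨hτpos, s, hper⟩ := hτ.1
  have hu0p : u0 < p := by simp only [mem_Icc] at hu0; omega
  have ht_le : t ≤ τ * ((p - 1) / 2 ^ k + 1) :=
    ht.le_mul_of_card_fiber_le (F := fun x => ((g ^ x) % (p : ℤ)).toNat) (expSeq_succ p g u0)
      (· % 2 ^ k) hτpos hper (range p) (fun n => mem_range.2 (expSeq_lt g hu0p n)) _
      (card_filter_mod_eq_le p _)
  have hnat : t * 2 ^ (k - 1) ≤ τ * p :=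
    calc t * 2 ^ (k - 1) ≤ τ * (((p - 1) / 2 ^ k + 1) * 2 ^ (k - 1)) := by
          rw [← mul_assoc]; exact Nat.mul_le_mul_right _ ht_le
      _ ≤ τ * p := Nat.mul_le_mul_left _ (sub_one_div_two_pow_add_one_mul_le h2k)
  rw [div_le_iff₀ (by exact_mod_cast (show 0 < p by omega))]
  exact_mod_cast hnat

/-- if `2^k < p` then `τ_k ≥ t·2^{k-1}/p`. -/
theorem tau_ge_trivial_bound
    (p : ℕ) (hp : p.Prime) (g : ℤ) (hg : ¬ (p : ℤ) ∣ g)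
    (u0 : ℕ) (hu0 : u0 ∈ Finset.Icc 1 (p - 1)) (k : ℕ) (hk : 1 ≤ k)
    (h2k : 2 ^ k < p)
    (t τ : ℕ) (ht : IsLeastPeriod (expSeq p g u0) t)
    (hτ : IsLeastPeriod (fun n => expSeq p g u0 n % 2 ^ k) τ) :
    (t : ℝ) * 2 ^ (k - 1) / p ≤ (τ : ℝ) :=
  tau_ge_trivial_bound_general p g u0 hu0 k h2k t τ ht hτ
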